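/- Let A be symmetric, b ∈ ℝ^d with b ≠ 0, ρ > 0, and let s be a global minimizer of f(x) = (1/2)xᵀAx + bᵀx + (ρ/3)‖x‖³. Define the Cauchy radius R_c = −(bᵀAb)/(2ρ‖b‖²) + sqrt(((bᵀAb)/(2ρ‖b‖²))² + ‖b‖/ρ). Then ‖s‖ ≥ R_c. -/

import Mathlib

/-!
Along the ray through `s`, `t ↦ f (t • s)` is a cubic polynomial in `t > 0` minimised at `t = 1`;
its stationarity gives `f s = bᵀs / 2 - ρ‖s‖³ / 6 ≥ -‖b‖‖s‖ / 2 - ρ‖s‖³ / 6` by Cauchy–Schwarz.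
The Cauchy radius `R_c` is the positive root of `ρ‖b‖²R² + (bᵀAb) R = ‖b‖³`, which makes the value
of `f` at the Cauchy point `-(R_c / ‖b‖) b` equal to `-‖b‖R_c / 2 - ρR_c³ / 6`. Comparing with
`f s ≤ f (-(R_c / ‖b‖) b)` and using that `r ↦ ‖b‖r / 2 + ρr³ / 6` is increasing gives `‖s‖ ≥ R_c`.
-/

open Matrix

noncomputable def eNorm {d : ℕ} (x : Fin d → ℝ) : ℝ := Real.sqrt (x ⬝ᵥ x)

section EuclideanNorm

variable {d : ℕ}

lemma dotProduct_eq_inner_toLp (x y : Fin d → ℝ) :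
    x ⬝ᵥ y = inner ℝ (WithLp.toLp 2 x) (WithLp.toLp 2 y) := by
  rw [EuclideanSpace.inner_toLp_toLp, star_trivial, dotProduct_comm]

lemma eNorm_eq_norm_toLp (x : Fin d → ℝ) : eNorm x = ‖WithLp.toLp 2 x‖ := by
  rw [norm_eq_sqrt_real_inner, ← dotProduct_eq_inner_toLp, eNorm]

lemma eNorm_sq (x : Fin d → ℝ) : eNorm x ^ 2 = x ⬝ᵥ x := by
  rw [eNorm_eq_norm_toLp, ← real_inner_self_eq_norm_sq, dotProduct_eq_inner_toLp]

lemma eNorm_pos {x : Fin d → ℝ} (hx : x ≠ 0) : 0 < eNorm x := by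
  rwa [eNorm_eq_norm_toLp, norm_pos_iff, Ne, WithLp.toLp_eq_zero]

lemma eNorm_smul (t : ℝ) (x : Fin d → ℝ) : eNorm (t • x) = |t| * eNorm x := by
  rw [eNorm_eq_norm_toLp, eNorm_eq_norm_toLp, WithLp.toLp_smul, norm_smul, Real.norm_eq_abs]

lemma neg_eNorm_mul_le_dotProduct (x y : Fin d → ℝ) : -(eNorm x * eNorm y) ≤ x ⬝ᵥ y := by
  rw [eNorm_eq_norm_toLp, eNorm_eq_norm_toLp, dotProduct_eq_inner_toLp]
  exact neg_le_of_abs_le (abs_real_inner_le_norm _ _)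

end EuclideanNorm

lemma le_of_linear_add_cube_le {β ρ x y : ℝ} (hβ : 0 < β) (hρ : 0 ≤ ρ)
    (h : β * x + ρ * x ^ 3 ≤ β * y + ρ * y ^ 3) : x ≤ y := by
  by_contra! hyx
  have hcube : y ^ 3 ≤ x ^ 3 := (Odd.strictMono_pow (by decide)).monotone hyx.le
  nlinarith [mul_le_mul_of_nonneg_left hcube hρ]

lemma neg_add_sqrt_sq_add_pos (q : ℝ) {p : ℝ} (hp : 0 < p) : 0 < -q + √(q ^ 2 + p) := by
  have : |q| < √(q ^ 2 + p) := by
    rw [← Real.sqrt_sq_eq_abs]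
    exact Real.sqrt_lt_sqrt (sq_nonneg q) (by linarith)
  linarith [le_abs_self q]

lemma neg_add_sqrt_sq_add_isRoot (q : ℝ) {p : ℝ} (hp : 0 ≤ p) :
    (-q + √(q ^ 2 + p)) ^ 2 + 2 * q * (-q + √(q ^ 2 + p)) = p := by
  nlinarith [Real.sq_sqrt (by positivity : 0 ≤ q ^ 2 + p)]

section CubicModel

variable {d : ℕ} (A : Matrix (Fin d) (Fin d) ℝ) (b : Fin d → ℝ) (ρ : ℝ)

noncomputable def cubicModel (x : Fin d → ℝ) : ℝ :=
  1 / 2 * (x ⬝ᵥ A *ᵥ x) + b ⬝ᵥ x + ρ / 3 * eNorm x ^ 3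

noncomputable def cauchyRadius : ℝ :=
  -(b ⬝ᵥ A *ᵥ b) / (2 * ρ * eNorm b ^ 2)
    + √((b ⬝ᵥ A *ᵥ b / (2 * ρ * eNorm b ^ 2)) ^ 2 + eNorm b / ρ)

variable {A b ρ}

lemma cubicModel_smul {t : ℝ} (ht : 0 ≤ t) (x : Fin d → ℝ) :
    cubicModel A b ρ (t • x) =
      (x ⬝ᵥ A *ᵥ x) / 2 * t ^ 2 + (b ⬝ᵥ x) * t + ρ / 3 * eNorm x ^ 3 * t ^ 3 := by
  simp only [cubicModel, mulVec_smul, smul_dotProduct, dotProduct_smul, smul_eq_mul,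
    eNorm_smul, abs_of_nonneg ht]
  ring

lemma cubicModel_stationary_of_isMin {s : Fin d → ℝ}
    (hs : ∀ x, cubicModel A b ρ s ≤ cubicModel A b ρ x) :
    s ⬝ᵥ A *ᵥ s + b ⬝ᵥ s + ρ * eNorm s ^ 3 = 0 := by
  set P : ℝ → ℝ := fun t =>
    (s ⬝ᵥ A *ᵥ s) / 2 * t ^ 2 + (b ⬝ᵥ s) * t + ρ / 3 * eNorm s ^ 3 * t ^ 3
  have hmin : IsLocalMin P 1 := by
    filter_upwards [Ioi_mem_nhds one_pos] with t ht
    calc P 1 = cubicModel A b ρ ((1 : ℝ) • s) := (cubicModel_smul zero_le_one s).symm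
      _ = cubicModel A b ρ s := by rw [one_smul]
      _ ≤ cubicModel A b ρ (t • s) := hs _
      _ = P t := cubicModel_smul (le_of_lt ht) s
  have hderiv : HasDerivAt P (s ⬝ᵥ A *ᵥ s + b ⬝ᵥ s + ρ * eNorm s ^ 3) 1 := by
    have := (((hasDerivAt_pow 2 (1 : ℝ)).const_mul ((s ⬝ᵥ A *ᵥ s) / 2)).add
      ((hasDerivAt_id (1 : ℝ)).const_mul (b ⬝ᵥ s))).add
      ((hasDerivAt_pow 3 (1 : ℝ)).const_mul (ρ / 3 * eNorm s ^ 3))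
    refine this.congr_deriv ?_
    norm_num
    ring
  exact hmin.hasDerivAt_eq_zero hderiv

lemma cubicModel_ge_of_isMin {s : Fin d → ℝ}
    (hs : ∀ x, cubicModel A b ρ s ≤ cubicModel A b ρ x) :
    -(eNorm b * eNorm s) / 2 - ρ / 6 * eNorm s ^ 3 ≤ cubicModel A b ρ s := by
  have hstat := cubicModel_stationary_of_isMin hs
  have hcs := neg_eNorm_mul_le_dotProduct b s
  simp only [cubicModel]
  linarith

lemma cauchyRadius_pos (hb : b ≠ 0) (hρ : 0 < ρ) : 0 < cauchyRadius A b ρ := by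
  rw [cauchyRadius, neg_div]
  exact neg_add_sqrt_sq_add_pos _ (div_pos (eNorm_pos hb) hρ)

lemma cauchyRadius_isRoot (hb : b ≠ 0) (hρ : 0 < ρ) :
    ρ * eNorm b ^ 2 * cauchyRadius A b ρ ^ 2 + (b ⬝ᵥ A *ᵥ b) * cauchyRadius A b ρ
      = eNorm b ^ 3 := by
  have hβ := eNorm_pos hb
  have hroot := neg_add_sqrt_sq_add_isRoot (b ⬝ᵥ A *ᵥ b / (2 * ρ * eNorm b ^ 2))
    (div_pos hβ hρ).le
  rw [← neg_div] at hroot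
  change cauchyRadius A b ρ ^ 2 + _ * cauchyRadius A b ρ = _ at hroot
  field_simp at hroot
  linear_combination hroot

lemma cubicModel_cauchyPoint (hb : b ≠ 0) (hρ : 0 < ρ) :
    cubicModel A b ρ ((cauchyRadius A b ρ / eNorm b) • -b) =
      -(eNorm b * cauchyRadius A b ρ) / 2 - ρ / 6 * cauchyRadius A b ρ ^ 3 := by
  have hβ := eNorm_pos hb
  have hR := cauchyRadius_isRoot (A := A) hb hρ
  have hnorm : eNorm (-b) = eNorm b := by simpa using eNorm_smul (-1) b
  rw [cubicModel_smul (div_pos (cauchyRadius_pos hb hρ) hβ).le]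
  simp only [mulVec_neg, dotProduct_neg, neg_dotProduct, neg_neg, ← eNorm_sq, hnorm]
  field_simp
  linear_combination (18 * cauchyRadius A b ρ) * hR

end CubicModel

theorem stmt_2_general {d : ℕ} (A : Matrix (Fin d) (Fin d) ℝ)
    (b : Fin d → ℝ) (hb : b ≠ 0) (ρ : ℝ) (hρ : 0 < ρ)
    (f : (Fin d → ℝ) → ℝ)
    (hf : ∀ x, f x = (1/2) * (x ⬝ᵥ A.mulVec x) + b ⬝ᵥ x + (ρ/3) * eNorm x ^ 3)
    (s : Fin d → ℝ)
    (hglob : ∀ x, f s ≤ f x)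
    (Rc : ℝ)
    (hRc : Rc = -(b ⬝ᵥ A.mulVec b) / (2 * ρ * eNorm b ^ 2)
      + Real.sqrt ((b ⬝ᵥ A.mulVec b / (2 * ρ * eNorm b ^ 2))^2 + eNorm b / ρ)) :
    eNorm s ≥ Rc := by
  have hfA : f = cubicModel A b ρ := funext hf
  change Rc = cauchyRadius A b ρ at hRc
  subst hfA hRc
  have hlower := cubicModel_ge_of_isMin hglob
  have hupper := hglob ((cauchyRadius A b ρ / eNorm b) • -b)
  rw [cubicModel_cauchyPoint hb hρ] at hupper
  exact le_of_linear_add_cube_le (ρ := ρ / 6) (half_pos (eNorm_pos hb)) (by positivity)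
    (by linarith)

theorem stmt_2 {d : ℕ} (A : Matrix (Fin d) (Fin d) ℝ) (hA : A.IsSymm)
    (b : Fin d → ℝ) (hb : b ≠ 0) (ρ : ℝ) (hρ : 0 < ρ)
    (f : (Fin d → ℝ) → ℝ)
    (hf : ∀ x, f x = (1/2) * (x ⬝ᵥ A.mulVec x) + b ⬝ᵥ x + (ρ/3) * eNorm x ^ 3)
    (s : Fin d → ℝ)
    (hglob : ∀ x, f s ≤ f x)
    (Rc : ℝ)
    (hRc : Rc = -(b ⬝ᵥ A.mulVec b) / (2 * ρ * eNorm b ^ 2)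
      + Real.sqrt ((b ⬝ᵥ A.mulVec b / (2 * ρ * eNorm b ^ 2))^2 + eNorm b / ρ)) :
    eNorm s ≥ Rc :=
  stmt_2_general A b hb ρ hρ f hf s hglob Rc hRc
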